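/- arXiv:1703.08904 — 2 statements merged into one kernel-verified Lean document; each statement's English description precedes it below -/
import Mathlib

section
/- Let a : ℝ → ℝ and b : ℝ² → ℝ be smooth, define λ(u,v) = a(v) − u and the vector field X(u,v) = (b(u,v), 1) on ℝ², with iterated directional derivative (X·φ)(p) = dφ_p(X(p)), X^l·φ = X·(X^{l−1}·φ). Then for every integer l ≥ 1 there exist smooth functions h₀, …, h_{l−1} : ℝ² → ℝ such that for all (u,v), (X^l·λ)(u,v) = b(u,v)·h₀(u,v) + Σ_{j=1}^{l−1} (∂^j b/∂v^j)(u,v)·h_j(u,v) + a^{(l)}(v), where a^{(l)} is the l-th derivative of a. -/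
/-- Directional derivative of a function along a vector field on `ℝ²`:
`(X·φ)(p) = dφ_p(X(p))`. -/
noncomputable def dirDeriv (X : ℝ × ℝ → ℝ × ℝ) (φ : ℝ × ℝ → ℝ) : ℝ × ℝ → ℝ :=
  fun p => fderiv ℝ φ p (X p)

/-- Iterated directional derivative: `X^0·φ = φ`, `X^l·φ = X·(X^{l−1}·φ)`. -/
noncomputable def dirDerivIter (X : ℝ × ℝ → ℝ × ℝ) : ℕ → (ℝ × ℝ → ℝ) → (ℝ × ℝ → ℝ)
  | 0, φ => φ
  | n + 1, φ => dirDeriv X (dirDerivIter X n φ)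


noncomputable def pv (f : ℝ × ℝ → ℝ) : ℝ × ℝ → ℝ := fun p => fderiv ℝ f p (0, 1)
noncomputable def pu (f : ℝ × ℝ → ℝ) : ℝ × ℝ → ℝ := fun p => fderiv ℝ f p (1, 0)

lemma contDiff_pv {f : ℝ × ℝ → ℝ} (hf : ContDiff ℝ (⊤ : ℕ∞) f) : ContDiff ℝ (⊤ : ℕ∞) (pv f) :=
  (hf.fderiv_right (by simp)).clm_apply contDiff_const

lemma contDiff_pu {f : ℝ × ℝ → ℝ} (hf : ContDiff ℝ (⊤ : ℕ∞) f) : ContDiff ℝ (⊤ : ℕ∞) (pu f) :=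
  (hf.fderiv_right (by simp)).clm_apply contDiff_const

lemma contDiff_pv_iter {f : ℝ × ℝ → ℝ} (hf : ContDiff ℝ (⊤ : ℕ∞) f) (j : ℕ) :
    ContDiff ℝ (⊤ : ℕ∞) (pv^[j] f) := by
  induction j with
  | zero => exact hf
  | succ j ih => rw [Function.iterate_succ_apply']; exact contDiff_pv ih

lemma contDiff_iteratedDeriv {a : ℝ → ℝ} (ha : ContDiff ℝ (⊤ : ℕ∞) a) (m : ℕ) :
    ContDiff ℝ (⊤ : ℕ∞) (iteratedDeriv m a) := by
  induction m with
  | zero => simpa [iteratedDeriv_zero] using ha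
  | succ m ih =>
    rw [iteratedDeriv_succ]
    have : deriv (iteratedDeriv m a) = fun x => fderiv ℝ (iteratedDeriv m a) x 1 := rfl
    rw [this]
    exact (ih.fderiv_right (by simp)).clm_apply contDiff_const

lemma fderiv_apply_add {f g : ℝ × ℝ → ℝ} {p w : ℝ × ℝ} (hf : DifferentiableAt ℝ f p)
    (hg : DifferentiableAt ℝ g p) :
    fderiv ℝ (fun q => f q + g q) p w = fderiv ℝ f p w + fderiv ℝ g p w := by
  rw [fderiv_fun_add hf hg]; simp

lemma fderiv_apply_mul {f g : ℝ × ℝ → ℝ} {p w : ℝ × ℝ} (hf : DifferentiableAt ℝ f p)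
    (hg : DifferentiableAt ℝ g p) :
    fderiv ℝ (fun q => f q * g q) p w = fderiv ℝ f p w * g p + f p * fderiv ℝ g p w := by
  rw [fderiv_fun_mul hf hg]; simp [mul_comm]; ring

lemma fderiv_apply_sum {s : Finset ℕ} {f : ℕ → ℝ × ℝ → ℝ} {p w : ℝ × ℝ}
    (hf : ∀ j ∈ s, DifferentiableAt ℝ (f j) p) :
    fderiv ℝ (fun q => ∑ j ∈ s, f j q) p w = ∑ j ∈ s, fderiv ℝ (f j) p w := by
  rw [fderiv_fun_sum hf]; simp

lemma hasDerivAt_slice (g : ℝ × ℝ → ℝ) {u v : ℝ} (hg : DifferentiableAt ℝ g (u, v)) :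
    HasDerivAt (fun w => g (u, w)) (fderiv ℝ g (u, v) (0, 1)) v := by
  have h1 : HasFDerivAt (fun w : ℝ => (u, w))
      ((0 : ℝ →L[ℝ] ℝ).prod (ContinuousLinearMap.id ℝ ℝ)) v :=
    HasFDerivAt.prodMk (hasFDerivAt_const u v) (hasFDerivAt_id v)
  have h2 := (hg.hasFDerivAt.comp v h1).hasDerivAt
  have e : (((fderiv ℝ g (u, v)).comp
      ((0 : ℝ →L[ℝ] ℝ).prod (ContinuousLinearMap.id ℝ ℝ))) : ℝ →L[ℝ] ℝ) 1
      = fderiv ℝ g (u, v) (0, 1) := by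
    rw [ContinuousLinearMap.comp_apply, ContinuousLinearMap.prod_apply]
    norm_num
  rw [← e]
  exact h2

lemma fderiv_apply_comp_snd (g : ℝ → ℝ) {p : ℝ × ℝ} (hg : DifferentiableAt ℝ g p.2)
    (w : ℝ × ℝ) :
    fderiv ℝ (fun q : ℝ × ℝ => g q.2) p w = w.2 * deriv g p.2 := by
  have h1 : HasFDerivAt (fun q : ℝ × ℝ => g q.2)
      ((fderiv ℝ g p.2).comp (ContinuousLinearMap.snd ℝ ℝ ℝ)) p :=
    hg.hasFDerivAt.comp p hasFDerivAt_snd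
  rw [h1.fderiv, ContinuousLinearMap.comp_apply]
  have : (ContinuousLinearMap.snd ℝ ℝ ℝ) w = w.2 := rfl
  rw [this]
  calc fderiv ℝ g p.2 w.2 = fderiv ℝ g p.2 (w.2 • (1 : ℝ)) := by norm_num
    _ = w.2 • fderiv ℝ g p.2 1 := (fderiv ℝ g p.2).map_smul _ _
    _ = w.2 * deriv g p.2 := by rw [fderiv_apply_one_eq_deriv]; rfl

lemma iteratedDeriv_slice {f : ℝ × ℝ → ℝ} (hf : ContDiff ℝ (⊤ : ℕ∞) f) (j : ℕ) (u v : ℝ) :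
    iteratedDeriv j (fun w => f (u, w)) v = pv^[j] f (u, v) := by
  induction j generalizing v with
  | zero => simp
  | succ j ih =>
    rw [iteratedDeriv_succ]
    have hfun : iteratedDeriv j (fun w => f (u, w)) = fun w => pv^[j] f (u, w) :=
      funext fun w => ih w
    rw [hfun, Function.iterate_succ_apply']
    exact (hasDerivAt_slice (pv^[j] f)
      (((contDiff_pv_iter hf j).differentiable (by simp)).differentiableAt)).deriv

lemma dirDeriv_eq (b : ℝ × ℝ → ℝ) (φ : ℝ × ℝ → ℝ) (p : ℝ × ℝ) :
    dirDeriv (fun p : ℝ × ℝ => (b p, (1 : ℝ))) φ p = b p * pu φ p + pv φ p := by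
  have h : (b p, (1 : ℝ)) = b p • ((1 : ℝ), (0 : ℝ)) + ((0 : ℝ), (1 : ℝ)) := by
    simp [Prod.ext_iff]
  rw [dirDeriv, h, map_add, map_smul]
  simp [pu, pv, smul_eq_mul]

lemma sum_Icc_shift (m : ℕ) (G : ℕ → ℝ) :
    ∑ j ∈ Finset.Icc 1 (m + 1), G j = G 1 + ∑ j ∈ Finset.Icc 1 m, G (j + 1) := by
  induction m with
  | zero => simp
  | succ m ih =>
    rw [Finset.sum_Icc_succ_top (by omega), ih, Finset.sum_Icc_succ_top (by omega : 1 ≤ m + 1)]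
    ring

lemma fderiv_lam {a : ℝ → ℝ} (ha : ContDiff ℝ (⊤ : ℕ∞) a) (p w : ℝ × ℝ) :
    fderiv ℝ (fun q : ℝ × ℝ => a q.2 - q.1) p w = w.2 * deriv a p.2 - w.1 := by
  have h1 : DifferentiableAt ℝ (fun q : ℝ × ℝ => a q.2) p :=
    ((ha.differentiable (by simp)).comp differentiable_snd).differentiableAt
  have h2 : DifferentiableAt ℝ (fun q : ℝ × ℝ => q.1) p := differentiableAt_fst
  rw [fderiv_fun_sub h1 h2, ContinuousLinearMap.sub_apply,
    fderiv_apply_comp_snd a ((ha.differentiable (by simp)).differentiableAt) w, fderiv_fst]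
  rfl

lemma key (a : ℝ → ℝ) (ha : ContDiff ℝ (⊤ : ℕ∞) a) (b : ℝ × ℝ → ℝ) (hb : ContDiff ℝ (⊤ : ℕ∞) b) :
    ∀ l : ℕ, 1 ≤ l → ∃ h : ℕ → ℝ × ℝ → ℝ,
      (∀ j, ContDiff ℝ (⊤ : ℕ∞) (h j)) ∧ (∀ j, l ≤ j → h j = 0) ∧
      ∀ p : ℝ × ℝ,
        dirDerivIter (fun p : ℝ × ℝ => (b p, (1 : ℝ))) l (fun p : ℝ × ℝ => a p.2 - p.1) p
        = b p * h 0 p + ∑ j ∈ Finset.Icc 1 (l - 1), pv^[j] b p * h j p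
          + iteratedDeriv l a p.2 := by
  intro l hl
  induction l, hl using Nat.le_induction with
  | base =>
    refine ⟨fun j => if j = 0 then (fun _ => (-1 : ℝ)) else 0, ?_, ?_, ?_⟩
    · intro j
      by_cases hj : j = 0 <;> simp [hj] <;> exact contDiff_const
    · intro j hj
      have : j ≠ 0 := by omega
      simp [this]
    · intro p
      have h1 : dirDerivIter (fun p : ℝ × ℝ => (b p, (1 : ℝ))) 1
          (fun p : ℝ × ℝ => a p.2 - p.1) p
          = dirDeriv (fun p : ℝ × ℝ => (b p, (1 : ℝ)))
            (fun p : ℝ × ℝ => a p.2 - p.1) p := rfl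
      rw [h1, dirDeriv_eq]
      simp [pu, pv, fderiv_lam ha, iteratedDeriv_one]
  | succ l hl ih =>
    obtain ⟨h, hh, hz, hfor⟩ := ih
    obtain ⟨m, rfl⟩ : ∃ m, l = m + 1 := ⟨l - 1, by omega⟩
    set X : ℝ × ℝ → ℝ × ℝ := fun p : ℝ × ℝ => (b p, (1 : ℝ)) with hX
    set F : ℝ × ℝ → ℝ := fun p => b p * h 0 p
      + ∑ j ∈ Finset.Icc 1 (m + 1 - 1), pv^[j] b p * h j p
      + iteratedDeriv (m + 1) a p.2 with hFdef
    have hFeq : dirDerivIter X (m + 1) (fun p : ℝ × ℝ => a p.2 - p.1) = F := funext hfor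
    have hS : ContDiff ℝ (⊤ : ℕ∞) (fun p : ℝ × ℝ => ∑ j ∈ Finset.Icc 1 (m + 1 - 1),
        pv^[j] b p * h j p) :=
      ContDiff.sum fun j _ => (contDiff_pv_iter hb j).mul (hh j)
    have hA : ContDiff ℝ (⊤ : ℕ∞) (fun p : ℝ × ℝ => iteratedDeriv (m + 1) a p.2) :=
      (contDiff_iteratedDeriv ha (m + 1)).comp contDiff_snd
    have hF : ContDiff ℝ (⊤ : ℕ∞) F := ((hb.mul (hh 0)).add hS).add hA
    refine ⟨fun j => if j = 0 then (fun p => pu F p + pv (h 0) p)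
      else (fun p => h (j - 1) p + pv (h j) p), ?_, ?_, ?_⟩
    · intro j
      by_cases hj : j = 0
      · simpa [hj] using (contDiff_pu hF).add (contDiff_pv (hh 0))
      · simpa [hj] using (hh (j - 1)).add (contDiff_pv (hh j))
    · intro j hj
      have hj0 : j ≠ 0 := by omega
      have e1 : h (j - 1) = 0 := hz _ (by omega)
      have e2 : h j = 0 := hz _ (by omega)
      funext p
      simp only [hj0, if_neg, ite_false, e1, e2, pv]
      rw [show (0 : ℝ × ℝ → ℝ) = (fun _ : ℝ × ℝ => (0 : ℝ)) from rfl, fderiv_fun_const]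
      simp
    · intro p
      -- differentiability facts
      have db : DifferentiableAt ℝ b p := (hb.differentiable (by simp)).differentiableAt
      have dh : ∀ j, DifferentiableAt ℝ (h j) p :=
        fun j => ((hh j).differentiable (by simp)).differentiableAt
      have dbi : ∀ j, DifferentiableAt ℝ (pv^[j] b) p :=
        fun j => ((contDiff_pv_iter hb j).differentiable (by simp)).differentiableAt
      have dS : DifferentiableAt ℝ (fun p : ℝ × ℝ => ∑ j ∈ Finset.Icc 1 (m + 1 - 1),
          pv^[j] b p * h j p) p := (hS.differentiable (by simp)).differentiableAt
      have dA : DifferentiableAt ℝ (fun p : ℝ × ℝ => iteratedDeriv (m + 1) a p.2) p :=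
        (hA.differentiable (by simp)).differentiableAt
      have h1 : dirDerivIter X (m + 1 + 1) (fun p : ℝ × ℝ => a p.2 - p.1) p
          = dirDeriv X (dirDerivIter X (m + 1) (fun p : ℝ × ℝ => a p.2 - p.1)) p := rfl
      rw [h1, hFeq, hX, dirDeriv_eq]
      -- compute pv F p
      have hpvF : pv F p = (pv b p * h 0 p + b p * pv (h 0) p)
          + (∑ j ∈ Finset.Icc 1 m, (pv^[j + 1] b p * h j p + pv^[j] b p * pv (h j) p))
          + deriv (iteratedDeriv (m + 1) a) p.2 := by
        show fderiv ℝ F p (0, 1) = _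
        rw [hFdef]
        rw [fderiv_apply_add (DifferentiableAt.fun_add (db.fun_mul (dh 0)) dS) dA,
          fderiv_apply_add (db.fun_mul (dh 0)) dS,
          fderiv_apply_mul db (dh 0),
          fderiv_apply_sum (fun j _ => (dbi j).fun_mul (dh j)),
          fderiv_apply_comp_snd (iteratedDeriv (m + 1) a)
            (((contDiff_iteratedDeriv ha (m + 1)).differentiable (by simp)).differentiableAt) (0, 1)]
        simp only [Nat.add_sub_cancel]
        have hterm : ∀ j ∈ Finset.Icc 1 m, (fderiv ℝ (fun y => pv^[j] b y * h j y) p) (0, 1)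
            = pv^[j + 1] b p * h j p + pv^[j] b p * pv (h j) p := by
          intro j _
          rw [fderiv_apply_mul (dbi j) (dh j)]
          rw [show fderiv ℝ (pv^[j] b) p (0, 1) = pv (pv^[j] b) p from rfl,
            ← Function.iterate_succ_apply' pv j b]
          rfl
        rw [Finset.sum_congr rfl hterm]
        norm_num [pu, pv]
      have hpvhm : pv (h (m + 1)) p = 0 := by
        rw [hz (m + 1) le_rfl]
        simp only [pv]
        rw [show (0 : ℝ × ℝ → ℝ) = (fun _ : ℝ × ℝ => (0 : ℝ)) from rfl, fderiv_fun_const]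
        simp
      -- normalize RHS sum
      have hHsum : ∑ j ∈ Finset.Icc 1 (m + 1 + 1 - 1),
          pv^[j] b p * (if j = 0 then (fun p => pu F p + pv (h 0) p)
            else (fun p => h (j - 1) p + pv (h j) p)) p
          = (pv b p * h 0 p + ∑ j ∈ Finset.Icc 1 m, pv^[j + 1] b p * h j p)
            + ∑ j ∈ Finset.Icc 1 m, pv^[j] b p * pv (h j) p := by
        have e0 : ∀ j ∈ Finset.Icc 1 (m + 1 + 1 - 1),
            pv^[j] b p * (if j = 0 then (fun p => pu F p + pv (h 0) p)
              else (fun p => h (j - 1) p + pv (h j) p)) p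
            = pv^[j] b p * h (j - 1) p + pv^[j] b p * pv (h j) p := by
          intro j hj
          rw [Finset.mem_Icc] at hj
          have : j ≠ 0 := by omega
          simp [this, mul_add]
        rw [Finset.sum_congr rfl e0, Finset.sum_add_distrib]
        simp only [Nat.add_sub_cancel]
        rw [sum_Icc_shift m (fun j => pv^[j] b p * h (j - 1) p),
          Finset.sum_Icc_succ_top (by omega : 1 ≤ m + 1), hpvhm]
        simp [Function.iterate_one]
      have hH0 : (fun j : ℕ => if j = 0 then (fun p => pu F p + pv (h 0) p)
          else (fun p => h (j - 1) p + pv (h j) p)) 0 p = pu F p + pv (h 0) p := by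
        norm_num
      rw [hpvF, hHsum, hH0,
        show iteratedDeriv (m + 1 + 1) a p.2 = deriv (iteratedDeriv (m + 1) a) p.2 from by
          rw [iteratedDeriv_succ],
        Finset.sum_add_distrib]
      ring

/-- The inductive formula of Lemma 2.3: for `λ(u,v) = a(v) − u` and the vector
field `X = b∂_u + ∂_v`, each iterated derivative `X^lλ` is of the form
`b·h₀ + Σ_{j=1}^{l−1} (∂^j b/∂v^j)·h_j + a^{(l)}(v)` with smooth
coefficients `h₀, …, h_{l−1}`. -/
theorem stmt_9 (a : ℝ → ℝ) (ha : ContDiff ℝ (⊤ : ℕ∞) a)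
    (b : ℝ × ℝ → ℝ) (hb : ContDiff ℝ (⊤ : ℕ∞) b)
    (l : ℕ) (hl : 1 ≤ l) :
    ∃ h : ℕ → ℝ × ℝ → ℝ, (∀ j : ℕ, j < l → ContDiff ℝ (⊤ : ℕ∞) (h j)) ∧
      ∀ u v : ℝ,
        dirDerivIter (fun p : ℝ × ℝ => (b p, (1 : ℝ))) l
            (fun p : ℝ × ℝ => a p.2 - p.1) (u, v)
          = b (u, v) * h 0 (u, v)
            + ∑ j ∈ Finset.Icc 1 (l - 1),
                iteratedDeriv j (fun w => b (u, w)) v * h j (u, v)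
            + iteratedDeriv l a v := by
  obtain ⟨h, hh, -, hfor⟩ := key a ha b hb l hl
  refine ⟨h, fun j _ => hh j, ?_⟩
  intro u v
  rw [hfor (u, v)]
  have : ∀ j ∈ Finset.Icc 1 (l - 1),
      iteratedDeriv j (fun w => b (u, w)) v * h j (u, v)
        = pv^[j] b (u, v) * h j (u, v) := fun j _ => by
    rw [iteratedDeriv_slice hb j u v]
  rw [Finset.sum_congr rfl this]
end

section
/- Let F : ℝ² → ℝ³ and ν₂ : ℝ² → ℝ³ be smooth maps with ⟨F_u, ν₂⟩ = 0 and ⟨F_v, ν₂⟩ = 0 everywhere, and let φ : ℝ² → ℝ³ be smooth with F_u(u,v) + u·F_v(u,v) = v·φ(u,v) for all (u,v). Define Ẽ = ⟨φ,φ⟩, F̃ = ⟨φ, F_v⟩, G̃ = ⟨F_v, F_v⟩, L̃₂ = −⟨φ, (ν₂)_u⟩, M̃₂ = −⟨φ, (ν₂)_v⟩, Ñ₂ = −⟨F_v, (ν₂)_v⟩, and E = ⟨F_u,F_u⟩, F = ⟨F_u,F_v⟩, G = ⟨F_v,F_v⟩, L₂ = ⟨F_uu,ν₂⟩, M₂ =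 ⟨F_uv,ν₂⟩, N₂ = ⟨F_vv,ν₂⟩. Then for all (u,v): L₂(G·L₂ − E·N₂) + 2M₂(E·M₂ − F·L₂) = v·(G̃L̃₂²v − G̃L̃₂Ñ₂u² + 4F̃L̃₂Ñ₂uv − (2F̃L̃₂M̃₂ + ẼL̃₂Ñ₂)v² − G̃M̃₂Ñ₂u³ + (G̃M̃₂² + 2F̃M̃₂Ñ₂ + ẼÑ₂²)u²v − (2F̃M̃₂² + 3ẼM̃₂Ñ₂)uv² + 2ẼM̃₂²v³); M₂(G·L₂ + E·N₂) − 2F·L₂·N₂ = v·(G̃L̃₂Ñ₂u + (G̃L̃₂M̃₂ − 2F̃L̃₂Ñ₂)v + G̃M̃₂Ñ₂u² − (G̃M̃₂² + ẼÑ₂²)uv + ẼM̃₂Ñ₂v²); and N₂(E·N₂ − G·L₂) + 2M₂(G·M₂ − F·N₂) = v·(−G̃L̃₂Ñ₂ − G̃M̃₂Ñ₂u + (2G̃M̃₂² − 2F̃M̃₂Ñ₂ + ẼÑ₂²)v). -/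
/-- Euclidean inner product on `ℝ × ℝ × ℝ`. -/
def dot3 (a b : ℝ × ℝ × ℝ) : ℝ := a.1 * b.1 + a.2.1 * b.2.1 + a.2.2 * b.2.2


section Aux

variable {E : Type*} [NormedAddCommGroup E] [NormedSpace ℝ E]

/-- Partial derivative in the first variable as a `HasDerivAt` statement. -/
lemma sliceU {H : ℝ × ℝ → E} (hH : Differentiable ℝ H) (u v : ℝ) :
    HasDerivAt (fun t => H (t, v)) (fderiv ℝ H (u, v) (1, 0)) u :=
  (hH (u, v)).hasFDerivAt.comp_hasDerivAt u
    ((hasDerivAt_id u).prodMk (hasDerivAt_const u v))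

/-- Partial derivative in the second variable as a `HasDerivAt` statement. -/
lemma sliceV {H : ℝ × ℝ → E} (hH : Differentiable ℝ H) (u v : ℝ) :
    HasDerivAt (fun w => H (u, w)) (fderiv ℝ H (u, v) (0, 1)) v :=
  (hH (u, v)).hasFDerivAt.comp_hasDerivAt v
    ((hasDerivAt_const v u).prodMk (hasDerivAt_id v))

lemma diffDw {H : ℝ × ℝ → E} (hH : ContDiff ℝ (⊤ : ℕ∞) H) (w : ℝ × ℝ) :
    Differentiable ℝ (fun p => fderiv ℝ H p w) := by
  have h2 : ContDiff ℝ 2 H := hH.of_le (by exact WithTop.coe_le_coe.mpr (le_top : (2 : ℕ∞) ≤ ⊤))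
  have h1 : ContDiff ℝ 1 (fderiv ℝ H) := h2.fderiv_right (by norm_num)
  exact (h1.clm_apply contDiff_const).differentiable one_ne_zero

lemma fderiv_fderiv_apply {H : ℝ × ℝ → E} (hH : ContDiff ℝ (⊤ : ℕ∞) H) (p w z : ℝ × ℝ) :
    fderiv ℝ (fun q => fderiv ℝ H q w) p z = fderiv ℝ (fderiv ℝ H) p z w := by
  have h2 : ContDiff ℝ 2 H := hH.of_le (by exact WithTop.coe_le_coe.mpr (le_top : (2 : ℕ∞) ≤ ⊤))
  have h1 : ContDiff ℝ 1 (fderiv ℝ H) := h2.fderiv_right (by norm_num)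
  have hd : DifferentiableAt ℝ (fderiv ℝ H) p := (h1.differentiable one_ne_zero) p
  have h : HasFDerivAt (fun q => fderiv ℝ H q w)
      ((ContinuousLinearMap.apply ℝ E w).comp (fderiv ℝ (fderiv ℝ H) p)) p :=
    (ContinuousLinearMap.apply ℝ E w).hasFDerivAt.comp p hd.hasFDerivAt
  rw [h.fderiv]; rfl

lemma symm2 {H : ℝ × ℝ → E} (hH : ContDiff ℝ (⊤ : ℕ∞) H) (p z w : ℝ × ℝ) :
    fderiv ℝ (fun q => fderiv ℝ H q w) p z
      = fderiv ℝ (fun q => fderiv ℝ H q z) p w := by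
  rw [fderiv_fderiv_apply hH, fderiv_fderiv_apply hH]
  exact hH.contDiffAt.isSymmSndFDerivAt (by rw [minSmoothness_of_isRCLikeNormedField]; exact WithTop.coe_le_coe.mpr (le_top : (2 : ℕ∞) ≤ ⊤)) z w

end Aux

lemma hasDerivAt_dot3 {f g : ℝ → ℝ × ℝ × ℝ} {f' g' : ℝ × ℝ × ℝ} {x : ℝ}
    (hf : HasDerivAt f f' x) (hg : HasDerivAt g g' x) :
    HasDerivAt (fun t => dot3 (f t) (g t)) (dot3 f' (g x) + dot3 (f x) g') x := by
  have f1 : HasDerivAt (fun t => (f t).1) f'.1 x :=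
    (ContinuousLinearMap.fst ℝ ℝ (ℝ × ℝ)).hasFDerivAt.comp_hasDerivAt x hf
  have f2 : HasDerivAt (fun t => (f t).2.1) f'.2.1 x :=
    (ContinuousLinearMap.fst ℝ ℝ ℝ).hasFDerivAt.comp_hasDerivAt x
      ((ContinuousLinearMap.snd ℝ ℝ (ℝ × ℝ)).hasFDerivAt.comp_hasDerivAt x hf)
  have f3 : HasDerivAt (fun t => (f t).2.2) f'.2.2 x :=
    (ContinuousLinearMap.snd ℝ ℝ ℝ).hasFDerivAt.comp_hasDerivAt x
      ((ContinuousLinearMap.snd ℝ ℝ (ℝ × ℝ)).hasFDerivAt.comp_hasDerivAt x hf)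
  have g1 : HasDerivAt (fun t => (g t).1) g'.1 x :=
    (ContinuousLinearMap.fst ℝ ℝ (ℝ × ℝ)).hasFDerivAt.comp_hasDerivAt x hg
  have g2 : HasDerivAt (fun t => (g t).2.1) g'.2.1 x :=
    (ContinuousLinearMap.fst ℝ ℝ ℝ).hasFDerivAt.comp_hasDerivAt x
      ((ContinuousLinearMap.snd ℝ ℝ (ℝ × ℝ)).hasFDerivAt.comp_hasDerivAt x hg)
  have g3 : HasDerivAt (fun t => (g t).2.2) g'.2.2 x :=
    (ContinuousLinearMap.snd ℝ ℝ ℝ).hasFDerivAt.comp_hasDerivAt x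
      ((ContinuousLinearMap.snd ℝ ℝ (ℝ × ℝ)).hasFDerivAt.comp_hasDerivAt x hg)
  have h := ((f1.mul g1).add (f2.mul g2)).add (f3.mul g3)
  refine h.congr_deriv ?_
  simp [dot3]; ring

lemma dot3_smul_sub_left (r s : ℝ) (a b c : ℝ × ℝ × ℝ) :
    dot3 (r • a - s • b) c = r * dot3 a c - s * dot3 b c := by
  obtain ⟨a1, a2, a3⟩ := a; obtain ⟨b1, b2, b3⟩ := b; obtain ⟨c1, c2, c3⟩ := c
  simp [dot3, Prod.smul_mk, Prod.mk_sub_mk, smul_eq_mul]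
  ring

lemma dot3_expand (r s : ℝ) (a b : ℝ × ℝ × ℝ) :
    dot3 (r • a - s • b) (r • a - s • b)
      = r ^ 2 * dot3 a a - 2 * (r * s) * dot3 a b + s ^ 2 * dot3 b b := by
  obtain ⟨a1, a2, a3⟩ := a; obtain ⟨b1, b2, b3⟩ := b
  simp [dot3, Prod.smul_mk, Prod.mk_sub_mk, smul_eq_mul]
  ring

/-- Each coefficient of the characteristic-curve BDE `ω_ch` is divisible by
`v`, with the explicit quotients of the paper, near a singular point of the
second kind in the normal form of Section 3.2 (where `F_u + uF_v = vφ`). -/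
theorem stmt_13 (F ν₂ φ : ℝ → ℝ → ℝ × ℝ × ℝ)
    (hF : ContDiff ℝ (⊤ : ℕ∞) (fun p : ℝ × ℝ => F p.1 p.2))
    (hν : ContDiff ℝ (⊤ : ℕ∞) (fun p : ℝ × ℝ => ν₂ p.1 p.2))
    (hφ : ContDiff ℝ (⊤ : ℕ∞) (fun p : ℝ × ℝ => φ p.1 p.2))
    (Fu Fv Fuu Fuv Fvv νu νv : ℝ → ℝ → ℝ × ℝ × ℝ)
    (hFu : ∀ u v : ℝ, Fu u v = deriv (fun t => F t v) u)
    (hFv : ∀ u v : ℝ, Fv u v = deriv (fun w => F u w) v)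
    (hFuu : ∀ u v : ℝ, Fuu u v = deriv (fun t => Fu t v) u)
    (hFuv : ∀ u v : ℝ, Fuv u v = deriv (fun w => Fu u w) v)
    (hFvv : ∀ u v : ℝ, Fvv u v = deriv (fun w => Fv u w) v)
    (hνu : ∀ u v : ℝ, νu u v = deriv (fun t => ν₂ t v) u)
    (hνv : ∀ u v : ℝ, νv u v = deriv (fun w => ν₂ u w) v)
    (horth1 : ∀ u v : ℝ, dot3 (Fu u v) (ν₂ u v) = 0)
    (horth2 : ∀ u v : ℝ, dot3 (Fv u v) (ν₂ u v) = 0)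
    (hnull : ∀ u v : ℝ, Fu u v + u • Fv u v = v • φ u v)
    (Et Ft Gt Lt Mt Nt Ee Ff Gg L2 M2 N2 : ℝ → ℝ → ℝ)
    (hEt : ∀ u v : ℝ, Et u v = dot3 (φ u v) (φ u v))
    (hFt : ∀ u v : ℝ, Ft u v = dot3 (φ u v) (Fv u v))
    (hGt : ∀ u v : ℝ, Gt u v = dot3 (Fv u v) (Fv u v))
    (hLt : ∀ u v : ℝ, Lt u v = -dot3 (φ u v) (νu u v))
    (hMt : ∀ u v : ℝ, Mt u v = -dot3 (φ u v) (νv u v))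
    (hNt : ∀ u v : ℝ, Nt u v = -dot3 (Fv u v) (νv u v))
    (hEe : ∀ u v : ℝ, Ee u v = dot3 (Fu u v) (Fu u v))
    (hFf : ∀ u v : ℝ, Ff u v = dot3 (Fu u v) (Fv u v))
    (hGg : ∀ u v : ℝ, Gg u v = dot3 (Fv u v) (Fv u v))
    (hL2 : ∀ u v : ℝ, L2 u v = dot3 (Fuu u v) (ν₂ u v))
    (hM2 : ∀ u v : ℝ, M2 u v = dot3 (Fuv u v) (ν₂ u v))
    (hN2 : ∀ u v : ℝ, N2 u v = dot3 (Fvv u v) (ν₂ u v)) :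
    ∀ u v : ℝ,
      L2 u v * (Gg u v * L2 u v - Ee u v * N2 u v)
          + 2 * M2 u v * (Ee u v * M2 u v - Ff u v * L2 u v)
        = v * (Gt u v * Lt u v ^ 2 * v
            - Gt u v * Lt u v * Nt u v * u ^ 2
            + 4 * Ft u v * Lt u v * Nt u v * u * v
            - (2 * Ft u v * Lt u v * Mt u v + Et u v * Lt u v * Nt u v) * v ^ 2
            - Gt u v * Mt u v * Nt u v * u ^ 3
            + (Gt u v * Mt u v ^ 2 + 2 * Ft u v * Mt u v * Nt u v
                + Et u v * Nt u v ^ 2) * u ^ 2 * v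
            - (2 * Ft u v * Mt u v ^ 2 + 3 * Et u v * Mt u v * Nt u v) * u * v ^ 2
            + 2 * Et u v * Mt u v ^ 2 * v ^ 3)
      ∧ M2 u v * (Gg u v * L2 u v + Ee u v * N2 u v)
            - 2 * Ff u v * L2 u v * N2 u v
        = v * (Gt u v * Lt u v * Nt u v * u
            + (Gt u v * Lt u v * Mt u v - 2 * Ft u v * Lt u v * Nt u v) * v
            + Gt u v * Mt u v * Nt u v * u ^ 2
            - (Gt u v * Mt u v ^ 2 + Et u v * Nt u v ^ 2) * u * v
            + Et u v * Mt u v * Nt u v * v ^ 2)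
      ∧ N2 u v * (Ee u v * N2 u v - Gg u v * L2 u v)
            + 2 * M2 u v * (Gg u v * M2 u v - Ff u v * N2 u v)
        = v * (-(Gt u v * Lt u v * Nt u v)
            - Gt u v * Mt u v * Nt u v * u
            + (2 * Gt u v * Mt u v ^ 2 - 2 * Ft u v * Mt u v * Nt u v
                + Et u v * Nt u v ^ 2) * v) := by
  intro u v
  have hGd : Differentiable ℝ (fun p : ℝ × ℝ => F p.1 p.2) := hF.differentiable (by simp)
  have hNd : Differentiable ℝ (fun p : ℝ × ℝ => ν₂ p.1 p.2) := hν.differentiable (by simp)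
  -- first partial derivatives as fderiv applications
  have hFu' : ∀ a b : ℝ, Fu a b = fderiv ℝ (fun p : ℝ × ℝ => F p.1 p.2) (a, b) (1, 0) :=
    fun a b => by
      have h : HasDerivAt (fun t => F t b)
          (fderiv ℝ (fun p : ℝ × ℝ => F p.1 p.2) (a, b) (1, 0)) a := sliceU hGd a b
      rw [hFu]; exact h.deriv
  have hFv' : ∀ a b : ℝ, Fv a b = fderiv ℝ (fun p : ℝ × ℝ => F p.1 p.2) (a, b) (0, 1) :=
    fun a b => by
      have h : HasDerivAt (fun w => F a w)
          (fderiv ℝ (fun p : ℝ × ℝ => F p.1 p.2) (a, b) (0, 1)) b := sliceV hGd a b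
      rw [hFv]; exact h.deriv
  have hνu' : νu u v = fderiv ℝ (fun p : ℝ × ℝ => ν₂ p.1 p.2) (u, v) (1, 0) := by
    have h : HasDerivAt (fun t => ν₂ t v)
        (fderiv ℝ (fun p : ℝ × ℝ => ν₂ p.1 p.2) (u, v) (1, 0)) u := sliceU hNd u v
    rw [hνu]; exact h.deriv
  have hνv' : νv u v = fderiv ℝ (fun p : ℝ × ℝ => ν₂ p.1 p.2) (u, v) (0, 1) := by
    have h : HasDerivAt (fun w => ν₂ u w)
        (fderiv ℝ (fun p : ℝ × ℝ => ν₂ p.1 p.2) (u, v) (0, 1)) v := sliceV hNd u v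
    rw [hνv]; exact h.deriv
  have hDu := diffDw hF ((1 : ℝ), (0 : ℝ))
  have hDv := diffDw hF ((0 : ℝ), (1 : ℝ))
  have hFueq : (fun t => Fu t v)
      = fun t => fderiv ℝ (fun p : ℝ × ℝ => F p.1 p.2) (t, v) (1, 0) :=
    funext fun t => hFu' t v
  have hFueq2 : (fun w => Fu u w)
      = fun w => fderiv ℝ (fun p : ℝ × ℝ => F p.1 p.2) (u, w) (1, 0) :=
    funext fun w => hFu' u w
  have hFveq : (fun t => Fv t v)
      = fun t => fderiv ℝ (fun p : ℝ × ℝ => F p.1 p.2) (t, v) (0, 1) :=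
    funext fun t => hFv' t v
  have hFveq2 : (fun w => Fv u w)
      = fun w => fderiv ℝ (fun p : ℝ × ℝ => F p.1 p.2) (u, w) (0, 1) :=
    funext fun w => hFv' u w
  -- second partial derivatives
  have hFuv' : Fuv u v
      = fderiv ℝ (fun p => fderiv ℝ (fun p : ℝ × ℝ => F p.1 p.2) p (1, 0)) (u, v) (0, 1) := by
    have h : HasDerivAt (fun w => fderiv ℝ (fun p : ℝ × ℝ => F p.1 p.2) (u, w) (1, 0))
        (fderiv ℝ (fun p => fderiv ℝ (fun p : ℝ × ℝ => F p.1 p.2) p (1, 0)) (u, v) (0, 1)) v :=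
      sliceV hDu u v
    rw [hFuv, hFueq2]; exact h.deriv
  -- `HasDerivAt` statements
  have HFu_u : HasDerivAt (fun t => Fu t v) (Fuu u v) u := by
    have h : HasDerivAt (fun t => fderiv ℝ (fun p : ℝ × ℝ => F p.1 p.2) (t, v) (1, 0))
        (fderiv ℝ (fun p => fderiv ℝ (fun p : ℝ × ℝ => F p.1 p.2) p (1, 0)) (u, v) (1, 0)) u :=
      sliceU hDu u v
    rw [hFuu, hFueq, h.deriv]; exact h
  have HFu_v : HasDerivAt (fun w => Fu u w) (Fuv u v) v := by
    rw [hFuv', hFueq2]; exact sliceV hDu u v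
  have HFv_v : HasDerivAt (fun w => Fv u w) (Fvv u v) v := by
    have h : HasDerivAt (fun w => fderiv ℝ (fun p : ℝ × ℝ => F p.1 p.2) (u, w) (0, 1))
        (fderiv ℝ (fun p => fderiv ℝ (fun p : ℝ × ℝ => F p.1 p.2) p (0, 1)) (u, v) (0, 1)) v :=
      sliceV hDv u v
    rw [hFvv, hFveq2, h.deriv]; exact h
  have HFv_u : HasDerivAt (fun t => Fv t v) (Fuv u v) u := by
    have h : HasDerivAt (fun t => fderiv ℝ (fun p : ℝ × ℝ => F p.1 p.2) (t, v) (0, 1))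
        (fderiv ℝ (fun p => fderiv ℝ (fun p : ℝ × ℝ => F p.1 p.2) p (0, 1)) (u, v) (1, 0)) u :=
      sliceU hDv u v
    rw [hFveq, hFuv', ← symm2 hF (u, v) (1, 0) (0, 1)]
    exact h
  have Hν_u : HasDerivAt (fun t => ν₂ t v) (νu u v) u := by
    have h : HasDerivAt (fun t => ν₂ t v)
        (fderiv ℝ (fun p : ℝ × ℝ => ν₂ p.1 p.2) (u, v) (1, 0)) u := sliceU hNd u v
    rw [hνu']; exact h
  have Hν_v : HasDerivAt (fun w => ν₂ u w) (νv u v) v := by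
    have h : HasDerivAt (fun w => ν₂ u w)
        (fderiv ℝ (fun p : ℝ × ℝ => ν₂ p.1 p.2) (u, v) (0, 1)) v := sliceV hNd u v
    rw [hνv']; exact h
  -- differentiated orthogonality relations
  have eq1 : dot3 (Fuu u v) (ν₂ u v) + dot3 (Fu u v) (νu u v) = 0 := by
    have h0 : HasDerivAt (fun t => dot3 (Fu t v) (ν₂ t v)) 0 u := by
      have he : (fun t => dot3 (Fu t v) (ν₂ t v)) = fun _ => (0 : ℝ) :=
        funext fun t => horth1 t v
      rw [he]; exact hasDerivAt_const u 0
    exact (hasDerivAt_dot3 HFu_u Hν_u).unique h0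
  have eq2 : dot3 (Fuv u v) (ν₂ u v) + dot3 (Fu u v) (νv u v) = 0 := by
    have h0 : HasDerivAt (fun w => dot3 (Fu u w) (ν₂ u w)) 0 v := by
      have he : (fun w => dot3 (Fu u w) (ν₂ u w)) = fun _ => (0 : ℝ) :=
        funext fun w => horth1 u w
      rw [he]; exact hasDerivAt_const v 0
    exact (hasDerivAt_dot3 HFu_v Hν_v).unique h0
  have eq3 : dot3 (Fuv u v) (ν₂ u v) + dot3 (Fv u v) (νu u v) = 0 := by
    have h0 : HasDerivAt (fun t => dot3 (Fv t v) (ν₂ t v)) 0 u := by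
      have he : (fun t => dot3 (Fv t v) (ν₂ t v)) = fun _ => (0 : ℝ) :=
        funext fun t => horth2 t v
      rw [he]; exact hasDerivAt_const u 0
    exact (hasDerivAt_dot3 HFv_u Hν_u).unique h0
  have eq4 : dot3 (Fvv u v) (ν₂ u v) + dot3 (Fv u v) (νv u v) = 0 := by
    have h0 : HasDerivAt (fun w => dot3 (Fv u w) (ν₂ u w)) 0 v := by
      have he : (fun w => dot3 (Fv u w) (ν₂ u w)) = fun _ => (0 : ℝ) :=
        funext fun w => horth2 u w
      rw [he]; exact hasDerivAt_const v 0
    exact (hasDerivAt_dot3 HFv_v Hν_v).unique h0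
  -- expansion of Fu
  have hFuval : Fu u v = v • φ u v - u • Fv u v := eq_sub_of_add_eq (hnull u v)
  rw [hFuval, dot3_smul_sub_left] at eq1 eq2
  -- scalar coefficient identities
  have hNv : N2 u v = Nt u v := by rw [hN2, hNt]; linarith
  have hMv : M2 u v = v * Mt u v - u * Nt u v := by
    rw [hM2, hMt, hNt]; linarith
  have hLv : L2 u v = v * Lt u v - u * (v * Mt u v - u * Nt u v) := by
    rw [hL2, hLt, hMt, hNt]
    have h2 : dot3 (Fuv u v) (ν₂ u v)
        + (v * dot3 (φ u v) (νv u v) - u * dot3 (Fv u v) (νv u v)) = 0 := eq2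
    linear_combination eq1 + u * eq3 - u * h2
  have hEv : Ee u v = v ^ 2 * Et u v - 2 * (v * u) * Ft u v + u ^ 2 * Gt u v := by
    rw [hEe, hEt, hFt, hGt, hFuval, dot3_expand]
  have hFfv : Ff u v = v * Ft u v - u * Gt u v := by
    rw [hFf, hFt, hGt, hFuval, dot3_smul_sub_left]
  have hGv : Gg u v = Gt u v := by rw [hGg, hGt]
  refine ⟨?_, ?_, ?_⟩ <;> rw [hLv, hMv, hNv, hEv, hFfv, hGv] <;> ring
end
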